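/- arXiv:2101.05251 — 4 statements merged into one kernel-verified Lean document; each statement's English description precedes it below -/
import Mathlib

section
/- Let (Ω, μ) be a measure space with μ(Ω) < ∞ and (E_i) a sequence of μ-measurable subsets with ∑_{i=1}^∞ μ(E_i) = ∞. Then μ(limsup E_i) ≥ limsup_{n→∞} (∑_{i=1}^n μ(E_i))² / (∑_{i,j=1}^n μ(E_i ∩ E_j)). -/
/-!
For `f = ∑_{i ∈ F} 1_{E i}`, Cauchy–Schwarz against the indicator of the support of `f` gives
`(∑ μ(E i))² = (∫ f)² ≤ μ(⋃_{i ∈ F} E i) · ∫ f² = μ(⋃_{i ∈ F} E i) · ∑∑ μ(E i ∩ E j)`.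
Taking for `F` the block `m ≤ i < n` bounds `(Tₙ - Tₘ)² / Dₙ` by `μ(⋃_{i ≥ m} E i)`, where `Tₙ`
and `Dₙ` are the partial sums in the statement. Since `Tₙ → ∞`, dropping the first `m` terms
does not change the ratio asymptotically, and letting `m → ∞` uses continuity from above.
-/

open MeasureTheory Filter
open scoped ENNReal Topology

theorem sq_sum_indicator_one {α ι : Type*} (s : ι → Set α) (F : Finset ι) (x : α) :
    (∑ i ∈ F, (s i).indicator (1 : α → ℝ≥0∞) x) ^ 2 =
      ∑ p ∈ F ×ˢ F, (s p.1 ∩ s p.2).indicator 1 x := by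
  simp only [sq, Finset.sum_mul_sum, ← Finset.sum_product', Set.inter_indicator_one, Pi.mul_apply]

section CauchySchwarz

variable {α : Type*} [MeasurableSpace α]

theorem sq_lintegral_le_measure_univ_mul_lintegral_sq (μ : Measure α) {f : α → ℝ≥0∞}
    (hf : AEMeasurable f μ) : (∫⁻ x, f x ∂μ) ^ 2 ≤ μ Set.univ * ∫⁻ x, f x ^ 2 ∂μ := by
  have holder := ENNReal.lintegral_mul_le_Lp_mul_Lq μ .two_two hf aemeasurable_const (g := 1)
  simp only [Pi.mul_apply, Pi.one_apply, mul_one, one_pow, lintegral_const, one_mul,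
    ENNReal.rpow_two] at holder
  calc (∫⁻ x, f x ∂μ) ^ 2
      ≤ ((∫⁻ x, f x ^ 2 ∂μ) ^ (1 / 2 : ℝ) * μ Set.univ ^ (1 / 2 : ℝ)) ^ 2 := by gcongr
    _ = μ Set.univ * ∫⁻ x, f x ^ 2 ∂μ := by
      rw [mul_pow, ← ENNReal.rpow_natCast, ← ENNReal.rpow_natCast, ← ENNReal.rpow_mul,
        ← ENNReal.rpow_mul]
      norm_num [mul_comm]

theorem lintegral_sum_indicator_one {ι : Type*} (μ : Measure α) {s : ι → Set α}
    (hs : ∀ i, MeasurableSet (s i)) (F : Finset ι) :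
    ∫⁻ x, ∑ i ∈ F, (s i).indicator 1 x ∂μ = ∑ i ∈ F, μ (s i) := by
  rw [lintegral_finsetSum _ fun i _ => measurable_one.indicator (hs i)]
  simp [lintegral_indicator_one (hs _)]

theorem sq_sum_measure_le_measure_biUnion_mul {ι : Type*} (μ : Measure α) {E : ι → Set α}
    (hE : ∀ i, MeasurableSet (E i)) (F : Finset ι) :
    (∑ i ∈ F, μ (E i)) ^ 2 ≤ μ (⋃ i ∈ F, E i) * ∑ i ∈ F, ∑ j ∈ F, μ (E i ∩ E j) := by
  set U := ⋃ i ∈ F, E i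
  have hEU : ∀ i ∈ F, E i ⊆ U := fun i hi => Set.subset_biUnion_of_mem hi
  have hsum : ∑ i ∈ F, μ (E i) = ∫⁻ x, ∑ i ∈ F, (E i).indicator 1 x ∂μ.restrict U := by
    rw [lintegral_sum_indicator_one _ hE]
    exact Finset.sum_congr rfl fun i hi => (Measure.restrict_eq_self _ (hEU i hi)).symm
  have hsum_sq : ∑ i ∈ F, ∑ j ∈ F, μ (E i ∩ E j) =
      ∫⁻ x, (∑ i ∈ F, (E i).indicator 1 x) ^ 2 ∂μ.restrict U := by
    simp only [sq_sum_indicator_one]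
    rw [lintegral_sum_indicator_one (s := fun p : ι × ι => E p.1 ∩ E p.2) _
      (fun p => (hE p.1).inter (hE p.2)), Finset.sum_product]
    refine Finset.sum_congr rfl fun i hi => Finset.sum_congr rfl fun j _ => ?_
    exact (Measure.restrict_eq_self _ (Set.inter_subset_left.trans (hEU i hi))).symm
  rw [hsum, hsum_sq, ← Measure.restrict_apply_univ]
  exact sq_lintegral_le_measure_univ_mul_lintegral_sq _
    (Finset.aemeasurable_fun_sum _ fun i _ => (measurable_one.indicator (hE i)).aemeasurable)

end CauchySchwarz

theorem sq_sum_Ico_measure_le {Ω : Type*} [MeasurableSpace Ω] (μ : Measure Ω) {E : ℕ → Set Ω}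
    (hE : ∀ i, MeasurableSet (E i)) {m n : ℕ} :
    (∑ i ∈ Finset.Ico m n, μ (E i)) ^ 2 ≤
      μ (⋃ i, ⋃ (_ : m ≤ i), E i) *
        ∑ i ∈ Finset.range n, ∑ j ∈ Finset.range n, μ (E i ∩ E j) := by
  have hIco : Finset.Ico m n ⊆ Finset.range n := fun i hi =>
    Finset.mem_range.2 (Finset.mem_Ico.1 hi).2
  refine (sq_sum_measure_le_measure_biUnion_mul μ hE _).trans (mul_le_mul' ?_ ?_)
  · exact measure_mono <| Set.iUnion₂_subset fun i hi =>
      Set.subset_iUnion₂ (s := fun i (_ : m ≤ i) => E i) i (Finset.mem_Ico.1 hi).1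
  · exact (Finset.sum_le_sum fun i _ => Finset.sum_le_sum_of_subset hIco).trans
      (Finset.sum_le_sum_of_subset hIco)

theorem ENNReal.limsup_sq_div_le_of_tendsto_top {ι : Type*} {l : Filter ι} {T D : ι → ℝ≥0∞}
    {a c : ℝ≥0∞} (hT : Tendsto T l (𝓝 ∞)) (hT_ne : ∀ n, T n ≠ ∞) (hc : c ≠ ∞)
    (h : ∀ᶠ n in l, (T n - c) ^ 2 ≤ a * D n) :
    limsup (fun n => T n ^ 2 / D n) l ≤ a := by
  rcases l.eq_or_neBot with rfl | _
  · simp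
  have hgt : ∀ᶠ n in l, c < T n := hT.eventually (lt_mem_nhds hc.lt_top)
  have hratio : Tendsto (fun n => T n / (T n - c)) l (𝓝 1) := by
    have hTc : Tendsto (fun n => T n - c) l (𝓝 ∞) := by
      simpa [ENNReal.top_sub hc] using ENNReal.Tendsto.sub hT tendsto_const_nhds (Or.inr hc)
    have hone : Tendsto (fun n => 1 + c / (T n - c)) l (𝓝 1) := by
      simpa using tendsto_const_nhds.add
        (ENNReal.Tendsto.div tendsto_const_nhds (Or.inr ENNReal.top_ne_zero) hTc (Or.inr hc))
    refine hone.congr' ?_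
    filter_upwards [hgt] with n hn
    conv_rhs => arg 1; rw [← tsub_add_cancel_of_le hn.le]
    rw [ENNReal.add_div, ENNReal.div_self (tsub_pos_of_lt hn).ne' (ENNReal.sub_ne_top (hT_ne n))]
  have hbound : ∀ᶠ n in l, T n ^ 2 / D n ≤ (T n / (T n - c)) ^ 2 * a := by
    filter_upwards [hgt, h] with n hn hn'
    refine ENNReal.div_le_of_le_mul ?_
    calc T n ^ 2 = (T n / (T n - c)) ^ 2 * (T n - c) ^ 2 := by
          rw [← mul_pow, ENNReal.div_mul_cancel (tsub_pos_of_lt hn).ne'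
            (ENNReal.sub_ne_top (hT_ne n))]
      _ ≤ (T n / (T n - c)) ^ 2 * (a * D n) := by gcongr
      _ = _ := (mul_assoc _ _ _).symm
  calc limsup (fun n => T n ^ 2 / D n) l ≤ limsup (fun n => (T n / (T n - c)) ^ 2 * a) l :=
        limsup_le_limsup hbound
    _ = a := by
      simpa using (ENNReal.Tendsto.mul_const (ENNReal.Tendsto.pow hratio (n := 2))
        (Or.inl (by simp))).limsup_eq

/-- Chung–Erdős / Kochen–Stone. If `(Ω,μ)` is a finite measure space and
`(Eᵢ)` are measurable sets with `∑ μ(Eᵢ) = ∞`, then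
`μ(limsup Eᵢ) ≥ limsupₙ (∑_{i<n} μ(Eᵢ))² / (∑_{i,j<n} μ(Eᵢ ∩ Eⱼ))`. -/
theorem stmt_1 {Ω : Type*} [MeasurableSpace Ω] (μ : Measure Ω) [IsFiniteMeasure μ]
    (E : ℕ → Set Ω) (hE : ∀ i, MeasurableSet (E i))
    (hdiv : ∑' i, μ (E i) = ⊤) :
    limsup (fun n =>
        (∑ i ∈ Finset.range n, μ (E i)) ^ 2 /
          ∑ i ∈ Finset.range n, ∑ j ∈ Finset.range n, μ (E i ∩ E j)) atTop ≤
      μ (⋂ j, ⋃ i, ⋃ (_ : j ≤ i), E i) := by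
  have hT : Tendsto (fun n => ∑ i ∈ Finset.range n, μ (E i)) atTop (𝓝 ∞) :=
    hdiv ▸ ENNReal.tendsto_nat_tsum _
  have hT_ne : ∀ n, ∑ i ∈ Finset.range n, μ (E i) ≠ ∞ := fun n =>
    ENNReal.sum_ne_top.2 fun i _ => measure_ne_top μ _
  have htail_anti : Antitone fun m => ⋃ i, ⋃ (_ : m ≤ i), E i := fun m m' hm =>
    Set.biUnion_mono (fun i hi => hm.trans hi) fun _ _ => le_rfl
  rw [htail_anti.measure_iInter
    (fun m => (MeasurableSet.biUnion (Set.to_countable _) fun i _ => hE i).nullMeasurableSet)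
    ⟨0, measure_ne_top μ _⟩]
  refine le_iInf fun m => ENNReal.limsup_sq_div_le_of_tendsto_top hT hT_ne (hT_ne m) ?_
  filter_upwards [eventually_ge_atTop m] with n hmn
  rw [← Finset.sum_range_add_sum_Ico _ hmn, ENNReal.add_sub_cancel_left (hT_ne m)]
  exact sq_sum_Ico_measure_le μ hE
end

section
/- Let p be a prime and L_1,…,L_n linear forms in variables x = (x_0,…,x_n) with coefficients in the p-adic integers ℤ_p. Let τ_1,…,τ_n be positive reals with ∑ τ_i = n+1 and σ_1,…,σ_n reals with ∑ σ_i = n. Then there exists H_σ > 0 such that for all integers H_0,…,H_n ≥ 1 with T^{n+1} := (H_0+1)⋯(H_n+1) ≥ H_σ, there exists a nonzero integer vector x = (x_0,…,x_n) ∈ ℤ^{n+1} satisfying |x_i| ≤ H_i for all 0 ≤ i ≤ n and |L_i(x)|_p ≤ p^{σ_i} T^{-τ_i} for all 1 ≤ i ≤ n. -/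
/-!
Choose `kᵢ = ⌈τᵢ L/(n+1) - σᵢ⌉` where `p ^ L = ∏ (Hⱼ + 1)`. Because `∑ τᵢ = n + 1` and
`∑ σᵢ = n`, these exponents satisfy `p ^ (∑ kᵢ) < ∏ (Hⱼ + 1)`, so by the pigeonhole principle
two distinct points of the box `∏ [0, Hⱼ]` have the same image under the reductions
`Lᵢ mod p ^ kᵢ`. Their difference `x` is nonzero, lies in `∏ [-Hⱼ, Hⱼ]`, and satisfies
`|Lᵢ(x)|_p ≤ p ^ (-kᵢ) ≤ p ^ σᵢ T ^ (-τᵢ)`.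
-/

open Finset

theorem exists_ne_zero_abs_le_map_eq_zero {ι G : Type*} [Fintype ι] [AddCommGroup G] [Fintype G]
    (f : (ι → ℤ) →+ G) (H : ι → ℕ) (hcard : Fintype.card G < ∏ j, (H j + 1)) :
    ∃ x : ι → ℤ, x ≠ 0 ∧ (∀ j, |x j| ≤ H j) ∧ f x = 0 := by
  classical
  let g : (∀ j, Fin (H j + 1)) → G := fun v => f fun j => ((v j : ℕ) : ℤ)
  obtain ⟨v, w, hvw, hg⟩ := Fintype.exists_ne_map_eq_of_card_lt g (by simpa using hcard)
  refine ⟨fun j => ((v j : ℕ) : ℤ) - (w j : ℕ), fun h => hvw (funext fun j => Fin.ext ?_),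
    fun j => ?_, ?_⟩
  · simpa [sub_eq_zero] using congrFun h j
  · have := (v j).isLt
    have := (w j).isLt
    simp only [abs_le]
    omega
  · rw [← Pi.sub_def, map_sub, sub_eq_zero]
    exact hg

namespace PadicInt

variable {p : ℕ} [Fact p.Prime]

theorem norm_le_zpow_of_toZModPow_eq_zero {k : ℕ} {x : ℤ_[p]} (h : toZModPow k x = 0) :
    ‖x‖ ≤ (p : ℝ) ^ (-(k : ℤ)) := by
  rwa [norm_le_pow_iff_mem_span_pow, ← ker_toZModPow, RingHom.mem_ker]

/-- A `p`-adic Siegel lemma. -/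
theorem exists_ne_zero_abs_le_norm_sum_mul_le {κ ι : Type*} [Fintype κ] [Fintype ι]
    (c : κ → ι → ℤ_[p]) (H : ι → ℕ) (k : κ → ℕ) (hk : p ^ (∑ i, k i) < ∏ j, (H j + 1)) :
    ∃ x : ι → ℤ, x ≠ 0 ∧ (∀ j, |x j| ≤ H j) ∧
      ∀ i, ‖∑ j, c i j * (x j : ℤ_[p])‖ ≤ (p : ℝ) ^ (-(k i : ℤ)) := by
  classical
  have : ∀ i, NeZero (p ^ k i) := fun i => ⟨pow_ne_zero _ (Fact.out : p.Prime).ne_zero⟩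
  let f : (ι → ℤ) →+ ∀ i, ZMod (p ^ k i) :=
    { toFun := fun x i => toZModPow (k i) (∑ j, c i j * (x j : ℤ_[p]))
      map_zero' := by ext; simp
      map_add' := fun x y => by ext; simp [mul_add, sum_add_distrib] }
  have hcard : Fintype.card (∀ i, ZMod (p ^ k i)) = p ^ (∑ i, k i) := by
    simp [Fintype.card_pi, prod_pow_eq_pow_sum]
  obtain ⟨x, hx0, hxH, hfx⟩ := exists_ne_zero_abs_le_map_eq_zero f H (hcard ▸ hk)
  exact ⟨x, hx0, hxH, fun i => norm_le_zpow_of_toZModPow_eq_zero (congrFun hfx i)⟩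

end PadicInt

theorem exists_nat_exponents_of_rpow_le {b T : ℝ} (hb : 1 < b) {n : ℕ} (τ σ : Fin n → ℝ)
    (hτpos : ∀ i, 0 < τ i) (hτsum : ∑ i, τ i = n + 1) (hσsum : ∑ i, σ i = n)
    (hT : ∀ i, b ^ (σ i * (n + 1) / τ i) ≤ T) :
    ∃ k : Fin n → ℕ, b ^ (∑ i, k i) < T ∧
      ∀ i, b ^ (-(k i : ℤ)) ≤ b ^ σ i * T ^ (-τ i / (n + 1)) := by
  have hb0 : 0 < b := zero_lt_one.trans hb
  have hn : (univ : Finset (Fin n)).Nonempty := by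
    rcases n with _ | n
    · simp at hτsum
    · exact univ_nonempty
  have hT0 : 0 < T := (Real.rpow_pos_of_pos hb0 _).trans_le (hT (hn.choose))
  set L := Real.logb b T
  have hbL : b ^ L = T := Real.rpow_logb hb0 hb.ne' hT0
  set a : Fin n → ℝ := fun i => τ i / (n + 1) * L - σ i
  have ha : ∀ i, 0 ≤ a i := by
    intro i
    have : σ i * (n + 1) / τ i ≤ L := (Real.le_logb_iff_rpow_le hb hT0).mpr (hT i)
    rw [div_le_iff₀ (hτpos i)] at this
    simp only [a, sub_nonneg, div_mul_eq_mul_div, le_div_iff₀ (by positivity : (0 : ℝ) < n + 1)]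
    rwa [mul_comm L] at this
  have hsum_a : ∑ i, (a i + 1) = L := by
    simp only [a, sum_add_distrib, sum_sub_distrib, ← sum_mul, ← sum_div, hτsum, hσsum, sum_const,
      card_univ, Fintype.card_fin, nsmul_eq_mul, mul_one, sub_add_cancel]
    field_simp
  refine ⟨fun i => ⌈a i⌉₊, ?_, fun i => ?_⟩
  · have hlt : ∑ i, (⌈a i⌉₊ : ℝ) < L :=
      hsum_a ▸ sum_lt_sum_of_nonempty hn fun i _ => Nat.ceil_lt_add_one (ha i)
    calc b ^ (∑ i, ⌈a i⌉₊) = b ^ (∑ i, (⌈a i⌉₊ : ℝ)) := by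
          rw [← Real.rpow_natCast]; push_cast; rfl
      _ < b ^ L := Real.rpow_lt_rpow_of_exponent_lt hb hlt
      _ = T := hbL
  · calc b ^ (-(⌈a i⌉₊ : ℤ)) = b ^ (-(⌈a i⌉₊ : ℝ)) := by
          rw [← Real.rpow_intCast]; push_cast; rfl
      _ ≤ b ^ (-a i) := Real.rpow_le_rpow_of_exponent_le hb.le (neg_le_neg (Nat.le_ceil _))
      _ = b ^ σ i * T ^ (-τ i / (n + 1)) := by
          rw [← hbL, ← Real.rpow_mul hb0.le, ← Real.rpow_add hb0]
          congr 1
          simp only [a]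
          ring

/-- p-adic Minkowski theorem for linear forms. Given linear forms
`Lᵢ(x) = ∑_j c i j * x j` with coefficients in `ℤ_p`, positive reals `τᵢ` with
`∑ τᵢ = n+1` and reals `σᵢ` with `∑ σᵢ = n`, there is `H_σ > 0` such that whenever
`H₀,…,Hₙ ≥ 1` and `T^{n+1} := ∏ (Hᵢ+1) ≥ H_σ`, some nonzero integer vector `x` satisfies
`|xᵢ| ≤ Hᵢ` and `|Lᵢ(x)|_p ≤ p^{σᵢ} T^{-τᵢ}`. -/
theorem stmt_2 {p : ℕ} [Fact p.Prime] (n : ℕ)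
    (c : Fin n → Fin (n + 1) → ℤ_[p]) (τ σ : Fin n → ℝ)
    (hτpos : ∀ i, 0 < τ i) (hτsum : ∑ i, τ i = n + 1) (hσsum : ∑ i, σ i = n) :
    ∃ Hσ : ℝ, 0 < Hσ ∧
      ∀ H : Fin (n + 1) → ℕ, (∀ i, 1 ≤ H i) →
        Hσ ≤ ∏ i, ((H i : ℝ) + 1) →
        ∃ x : Fin (n + 1) → ℤ, x ≠ 0 ∧ (∀ i, |x i| ≤ (H i : ℤ)) ∧
          ∀ i : Fin n,
            ‖∑ j, c i j * (x j : ℤ_[p])‖ ≤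
              (p : ℝ) ^ (σ i) * (∏ j, ((H j : ℝ) + 1)) ^ (-(τ i) / (n + 1)) := by
  have hp : (1 : ℝ) < p := by exact_mod_cast (Fact.out : p.Prime).one_lt
  refine ⟨1 + ∑ i, (p : ℝ) ^ (σ i * (n + 1) / τ i), by positivity, fun H _ hHσ => ?_⟩
  obtain ⟨k, hk_sum, hk⟩ := exists_nat_exponents_of_rpow_le hp τ σ hτpos hτsum hσsum fun i =>
    calc (p : ℝ) ^ (σ i * (n + 1) / τ i) ≤ ∑ i, (p : ℝ) ^ (σ i * (n + 1) / τ i) :=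
          single_le_sum (f := fun i => (p : ℝ) ^ (σ i * (n + 1) / τ i))
            (fun _ _ => by positivity) (mem_univ i)
      _ ≤ _ := le_add_of_nonneg_left zero_le_one |>.trans hHσ
  obtain ⟨x, hx0, hxH, hx⟩ :=
    PadicInt.exists_ne_zero_abs_le_norm_sum_mul_le c H k (by exact_mod_cast hk_sum)
  exact ⟨x, hx0, hxH, fun i => (hx i).trans (hk i)⟩
end

section
/- Let p be prime, n ≥ 1, and ψ_1,…,ψ_n : ℕ → ℝ₊ with ψ_i(q) < 1/q. For distinct a_0, b_0 ∈ ℕ coprime to p, the Haar measure of the intersection 𝔄'_{a_0}(Ψ) ∩ 𝔄'_{b_0}(Ψ) satisfies μ_{p,n}(𝔄'_{a_0}(Ψ) ∩ 𝔄'_{b_0}(Ψ)) ≪ a_0^n b_0^n ∏_{i=1}^n ψ_i(a_0) ψ_i(b_0), with an implied constant depending only on p and n. -/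
/-!
In each coordinate, a point of `𝔄'_{a₀} ∩ 𝔄'_{b₀}` lies in the balls around `α/a₀` and `β/b₀`
for admissible numerators `α, β`, so `‖α/a₀ - β/b₀‖_p < max(ψ(a₀), ψ(b₀))` by the ultrametric
inequality, and the two balls meet in a ball of radius `min(ψ(a₀), ψ(b₀))`. With `p^{-v}` the
largest power of `p` below `max(ψ(a₀), ψ(b₀))` and `g = gcd(a₀, b₀)`, such a pair satisfies
`p^v g ∣ α b₀ - β a₀ ≠ 0`; the difference is nonzero because `α/a₀` and `β/b₀` are reduced
fractions with distinct denominators. As `|α b₀ - β a₀| ≤ 2 a₀ b₀`, it takes at most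
`4 a₀ b₀ / (p^v g)` values, each for at most `5 g` pairs, so there are at most
`20 a₀ b₀ max(ψ(a₀), ψ(b₀))` pairs, each contributing a cell of measure `≤ min(ψ(a₀), ψ(b₀))`.
-/

open MeasureTheory Filter
open scoped ENNReal

/-- The rectangle of points of `ℤ_p^n` lying `ψ i a0`-close to `(a i / a0)` in each
coordinate. -/
def rect (p : ℕ) [Fact p.Prime] (n : ℕ) (ψ : Fin n → ℕ → ℝ) (a0 : ℕ)
    (a : Fin n → ℤ) : Set (Fin n → ℤ_[p]) :=
  {x | ∀ i, ‖(x i : ℚ_[p]) - (a i : ℚ_[p]) / (a0 : ℚ_[p])‖ < ψ i a0}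

/-- Admissible numerator vectors: `|a i| ≤ a0` and `gcd (a i) a0 = 1`. -/
def adm (n : ℕ) (a0 : ℕ) : Set (Fin n → ℤ) :=
  {a | ∀ i, |a i| ≤ (a0 : ℤ) ∧ Int.gcd (a i) a0 = 1}

/-- The set `𝔄'_{a0}(Ψ)`. -/
def Aset (p : ℕ) [Fact p.Prime] (n : ℕ) (ψ : Fin n → ℕ → ℝ) (a0 : ℕ) :
    Set (Fin n → ℤ_[p]) :=
  ⋃ a ∈ adm n a0, rect p n ψ a0 a

/-- The limsup set `𝔚'_n(Ψ) = limsup_{a0 → ∞} 𝔄'_{a0}(Ψ)`. -/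
def Wset' (p : ℕ) [Fact p.Prime] (n : ℕ) (ψ : Fin n → ℕ → ℝ) :
    Set (Fin n → ℤ_[p]) :=
  ⋂ N, ⋃ a0, ⋃ (_ : N ≤ a0), Aset p n ψ a0

open Finset

lemma card_mul_le_of_forall_dvd_of_abs_le {T : Finset ℤ} {m X : ℕ} (hm : 0 < m)
    (hT : ∀ d ∈ T, (m : ℤ) ∣ d ∧ d ≠ 0 ∧ |d| ≤ X) : #T * m ≤ 2 * X := by
  set Q := X / m
  have hsub : T ⊆ ((Icc (-Q : ℤ) Q).erase 0).image (· * (m : ℤ)) := by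
    intro d hd
    obtain ⟨⟨e, rfl⟩, hne, hle⟩ := hT d hd
    refine mem_image.mpr ⟨e, mem_erase.mpr ⟨by rintro rfl; simp at hne, ?_⟩, mul_comm _ _⟩
    have : |e| * m ≤ X := by
      rw [abs_mul, abs_of_pos (by exact_mod_cast hm), mul_comm] at hle; exact_mod_cast hle
    have : |e| ≤ Q := by
      rw [Int.natCast_div, Int.le_ediv_iff_mul_le (by exact_mod_cast hm)]; exact this
    exact mem_Icc.mpr (abs_le.mp this)
  have hcard : #T ≤ 2 * Q := by
    refine (card_le_card hsub).trans (card_image_le.trans ?_)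
    rw [card_erase_of_mem (mem_Icc.mpr ⟨by simp, by simp⟩), Int.card_Icc]; omega
  calc #T * m ≤ 2 * Q * m := Nat.mul_le_mul_right _ hcard
    _ ≤ 2 * X := by rw [mul_assoc]; exact Nat.mul_le_mul_left _ (Nat.div_mul_le_self X m)

lemma card_filter_mul_sub_mul_eq_le {a b : ℕ} (ha : 0 < a) {S : Finset (ℤ × ℤ)}
    (hS : ∀ q ∈ S, |q.1| ≤ a) (d : ℤ) :
    #{q ∈ S | q.1 * b - q.2 * a = d} ≤ 4 * a.gcd b + 1 := by
  set g := a.gcd b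
  rcases (S.filter fun q => q.1 * b - q.2 * a = d).eq_empty_or_nonempty with h | ⟨q₀, hq₀⟩
  · simp [h]
  have hg : 0 < g := Nat.gcd_pos_of_pos_left b ha
  set M := a / g
  set N := b / g
  have haM : (a : ℤ) = g * M := by
    exact_mod_cast (Nat.mul_div_cancel' (Nat.gcd_dvd_left a b)).symm
  have hbN : (b : ℤ) = g * N := by
    exact_mod_cast (Nat.mul_div_cancel' (Nat.gcd_dvd_right a b)).symm
  have hM : (M : ℤ) ≠ 0 := by rintro h; rw [h] at haM; omega
  have hMN : IsCoprime (M : ℤ) N :=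
    Nat.isCoprime_iff_coprime.mpr (Nat.coprime_div_gcd_div_gcd hg)
  have hsub : {q ∈ S | q.1 * b - q.2 * a = d} ⊆
      (Icc (-(2 * g : ℤ)) (2 * g)).image fun e => (q₀.1 + e * M, q₀.2 + e * N) := by
    intro q hq
    obtain ⟨hqS, hqd⟩ := mem_filter.mp hq
    obtain ⟨hq₀S, hq₀d⟩ := mem_filter.mp hq₀
    have hcross : (q.1 - q₀.1) * N = (q.2 - q₀.2) * M := by
      have : (g : ℤ) * ((q.1 - q₀.1) * N) = g * ((q.2 - q₀.2) * M) := by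
        linear_combination hqd - hq₀d - (q.1 - q₀.1) * hbN + (q.2 - q₀.2) * haM
      exact mul_left_cancel₀ (by exact_mod_cast hg.ne') this
    obtain ⟨e, he⟩ : (M : ℤ) ∣ q.1 - q₀.1 := hMN.dvd_of_dvd_mul_right ⟨q.2 - q₀.2, by linarith⟩
    have he₂ : q.2 - q₀.2 = e * N := mul_right_cancel₀ hM (by rw [← hcross, he]; ring)
    have hea : (M : ℤ) * |e| ≤ M * (2 * g) := by
      have h1 := abs_le.mp (hS q hqS); have h2 := abs_le.mp (hS q₀ hq₀S)
      calc (M : ℤ) * |e| = |q.1 - q₀.1| := by rw [he, abs_mul, Nat.abs_cast]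
        _ ≤ 2 * a := by rw [abs_le]; constructor <;> linarith
        _ = M * (2 * g) := by rw [haM]; ring
    refine mem_image.mpr ⟨e, mem_Icc.mpr (abs_le.mp ?_), Prod.ext ?_ ?_⟩
    · exact le_of_mul_le_mul_left hea (lt_of_le_of_ne (by positivity) hM.symm)
    · dsimp only; linear_combination -he
    · dsimp only; linear_combination -he₂
  calc _ ≤ #(Icc (-(2 * g : ℤ)) (2 * g)) := (card_le_card hsub).trans card_image_le
    _ = 4 * g + 1 := by rw [Int.card_Icc]; omega

lemma card_mul_le_of_dvd_mul_sub_mul {a b L : ℕ} (ha : 0 < a) (hL : 0 < L)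
    {S : Finset (ℤ × ℤ)}
    (hS : ∀ q ∈ S, |q.1| ≤ a ∧ |q.2| ≤ b ∧
      ((L * a.gcd b : ℕ) : ℤ) ∣ q.1 * b - q.2 * a ∧ q.1 * b - q.2 * a ≠ 0) :
    #S * L ≤ 20 * (a * b) := by
  set g := a.gcd b
  have hg : 0 < g := Nat.gcd_pos_of_pos_left b ha
  set D : ℤ × ℤ → ℤ := fun q => q.1 * b - q.2 * a
  have himage : #(S.image D) * (L * g) ≤ 2 * (2 * (a * b)) := by
    refine card_mul_le_of_forall_dvd_of_abs_le (Nat.mul_pos hL hg) fun d hd => ?_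
    obtain ⟨q, hq, rfl⟩ := mem_image.mp hd
    obtain ⟨h₁, h₂, hdvd, hne⟩ := hS q hq
    refine ⟨hdvd, hne, ?_⟩
    calc |q.1 * b - q.2 * a| ≤ |q.1| * b + |q.2| * a := by
          simpa [abs_mul] using abs_sub (q.1 * b) (q.2 * a)
      _ ≤ a * b + b * a := by gcongr
      _ = (2 * (a * b) : ℕ) := by push_cast; ring
  have hfiber : ∀ d ∈ S.image D, #{q ∈ S | D q = d} ≤ 5 * g := fun d _ =>
    (card_filter_mul_sub_mul_eq_le ha (fun q hq => (hS q hq).1) d).trans (by omega)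
  calc #S * L ≤ 5 * g * #(S.image D) * L :=
        Nat.mul_le_mul_right _ (card_le_mul_card_image S _ hfiber)
    _ = 5 * (#(S.image D) * (L * g)) := by ring
    _ ≤ 20 * (a * b) := by omega

lemma mul_sub_mul_ne_zero_of_gcd_eq_one {a b : ℕ} (hab : a ≠ b) {α β : ℤ}
    (hα : Int.gcd α a = 1) (hβ : Int.gcd β b = 1) : α * b - β * a ≠ 0 := by
  intro h
  have hab' : α * b = β * a := sub_eq_zero.mp h
  have hadvd : (a : ℤ) ∣ b := (Int.isCoprime_iff_gcd_eq_one.mpr hα).symm.dvd_of_dvd_mul_right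
    ⟨β, by linarith⟩
  have hbdvd : (b : ℤ) ∣ a := (Int.isCoprime_iff_gcd_eq_one.mpr hβ).symm.dvd_of_dvd_mul_right
    ⟨α, by linarith⟩
  exact hab (by exact_mod_cast Int.dvd_antisymm (by positivity) (by positivity) hadvd hbdvd)

lemma IsUltrametricDist.norm_sub_lt_max {E : Type*} [SeminormedAddCommGroup E]
    [IsUltrametricDist E] {x y z : E} {r s : ℝ} (hx : ‖x - z‖ < r) (hy : ‖y - z‖ < s) :
    ‖x - y‖ < max r s := by
  rw [← dist_eq_norm] at hx hy ⊢
  exact (dist_triangle_max x z y).trans_lt (max_lt_max hx (dist_comm y z ▸ hy))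

namespace PadicInt

variable {p : ℕ} [hp : Fact p.Prime]

lemma index_span_pow (k : ℕ) :
    (Ideal.span {(p : ℤ_[p]) ^ k}).toAddSubgroup.index = p ^ k := by
  rw [← ker_toZModPow]
  change (toZModPow (p := p) k).toAddMonoidHom.ker.index = _
  rw [AddSubgroup.index_ker,
    AddMonoidHom.range_eq_top_of_surjective _ (ZMod.ringHom_surjective _)]
  simp

lemma exists_zpow_lt_forall_norm_lt_imp_le {r : ℝ} (hr : 0 < r) :
    ∃ k : ℕ, (p : ℝ) ^ (-(k : ℤ)) < r ∧
      ∀ x : ℤ_[p], ‖x‖ < r → ‖x‖ ≤ (p : ℝ) ^ (-(k : ℤ)) := by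
  have hex : ∃ k : ℕ, (p : ℝ) ^ (-(k : ℤ)) < r := by
    obtain ⟨k, hk⟩ := exists_pow_lt_of_lt_one hr
      (inv_lt_one_of_one_lt₀ (by exact_mod_cast hp.out.one_lt : (1 : ℝ) < p))
    exact ⟨k, by simpa [zpow_neg] using hk⟩
  classical
  refine ⟨Nat.find hex, Nat.find_spec hex, fun x hxr => ?_⟩
  rcases h : Nat.find hex with _ | m
  · simpa using x.norm_le_one
  · have hrm : r ≤ (p : ℝ) ^ (-(m : ℤ)) := not_lt.mp (Nat.find_min hex (by omega))
    have := (norm_lt_pow_iff_norm_le_pow_sub_one x (-(m : ℤ))).mp (hxr.trans_le hrm)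
    simpa [sub_eq_add_neg, add_comm] using this

lemma measure_pi_norm_le_zpow {ι : Type*} [Fintype ι] [MeasurableSpace (ι → ℤ_[p])]
    [BorelSpace (ι → ℤ_[p])] (μ : Measure (ι → ℤ_[p])) [μ.IsAddLeftInvariant]
    [IsProbabilityMeasure μ] (k : ι → ℕ) :
    μ {x | ∀ i, ‖x i‖ ≤ (p : ℝ) ^ (-(k i : ℤ))} =
      ENNReal.ofReal (∏ i, (p : ℝ) ^ (-(k i : ℤ))) := by
  set H : AddSubgroup (ι → ℤ_[p]) :=
    AddSubgroup.pi Set.univ fun i => (Ideal.span {(p : ℤ_[p]) ^ k i}).toAddSubgroup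
  have hH : (H : Set (ι → ℤ_[p])) = {x | ∀ i, ‖x i‖ ≤ (p : ℝ) ^ (-(k i : ℤ))} := by
    ext x
    simp only [H, SetLike.mem_coe, AddSubgroup.mem_pi, Set.mem_univ, true_implies,
      Submodule.mem_toAddSubgroup, Set.mem_ofPred_eq, norm_le_pow_iff_mem_span_pow]
  have hindex : H.index = ∏ i, p ^ k i := by
    simp [H, index_span_pow]
  have : H.FiniteIndex :=
    ⟨by rw [hindex]; exact prod_ne_zero_iff.mpr fun i _ => pow_ne_zero _ hp.out.ne_zero⟩
  have hHmeas : MeasurableSet (H : Set (ι → ℤ_[p])) := by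
    rw [hH, Set.ofPred_forall]
    exact MeasurableSet.iInter fun i =>
      (isClosed_le (continuous_apply i).norm continuous_const).measurableSet
  have hμH : μ H = (∏ i, (p : ℝ≥0∞) ^ k i)⁻¹ := by
    have := AddSubgroup.index_mul_measure H hHmeas μ
    rw [measure_univ, hindex] at this
    push_cast at this
    exact ENNReal.eq_inv_of_mul_eq_one_left (by rwa [mul_comm])
  rw [← hH, hμH, ENNReal.ofReal_prod_of_nonneg fun i _ => by positivity,
    ENNReal.prod_inv_distrib fun i _ j _ _ => .inl (by simp [hp.out.ne_zero])]
  refine prod_congr rfl fun i _ => ?_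
  rw [zpow_neg, zpow_natCast, ENNReal.ofReal_inv_of_pos (pow_pos (Nat.cast_pos.mpr hp.out.pos) _),
    ENNReal.ofReal_pow (Nat.cast_nonneg p), ENNReal.ofReal_natCast]

lemma measure_pi_ball_le {ι : Type*} [Fintype ι] [MeasurableSpace (ι → ℤ_[p])]
    [BorelSpace (ι → ℤ_[p])] (μ : Measure (ι → ℤ_[p])) [μ.IsAddLeftInvariant]
    [IsProbabilityMeasure μ] (y : ι → ℤ_[p]) {r : ι → ℝ} (hr : ∀ i, 0 < r i) :
    μ {x | ∀ i, ‖x i - y i‖ < r i} ≤ ENNReal.ofReal (∏ i, r i) := by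
  choose k hkr hk using fun i => exists_zpow_lt_forall_norm_lt_imp_le (p := p) (hr i)
  calc μ {x | ∀ i, ‖x i - y i‖ < r i}
      ≤ μ ((-y + ·) ⁻¹' {x | ∀ i, ‖x i‖ ≤ (p : ℝ) ^ (-(k i : ℤ))}) :=
        measure_mono fun x hx i => hk i _ (by simpa [neg_add_eq_sub] using hx i)
    _ = ENNReal.ofReal (∏ i, (p : ℝ) ^ (-(k i : ℤ))) := by
        rw [measure_preimage_add, measure_pi_norm_le_zpow]
    _ ≤ ENNReal.ofReal (∏ i, r i) :=
        ENNReal.ofReal_le_ofReal (prod_le_prod (fun i _ => by positivity) fun i _ => (hkr i).le)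

end PadicInt

section closePairs

variable {p : ℕ} [hp : Fact p.Prime]

lemma Padic.norm_div_sub_div {a b : ℕ} (ha : a.Coprime p) (hb : b.Coprime p) (α β : ℤ) :
    ‖(α : ℚ_[p]) / a - β / b‖ = ‖((α * b - β * a : ℤ) : ℚ_[p])‖ := by
  have ha' : ‖(a : ℚ_[p])‖ = 1 := Padic.norm_natCast_eq_one_iff.mpr ha.symm
  have hb' : ‖(b : ℚ_[p])‖ = 1 := Padic.norm_natCast_eq_one_iff.mpr hb.symm
  have ha₀ : (a : ℚ_[p]) ≠ 0 := norm_ne_zero_iff.mp (by rw [ha']; exact one_ne_zero)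
  have hb₀ : (b : ℚ_[p]) ≠ 0 := norm_ne_zero_iff.mp (by rw [hb']; exact one_ne_zero)
  rw [div_sub_div _ _ ha₀ hb₀, norm_div, norm_mul, ha', hb']
  push_cast
  ring_nf

variable (p) in
noncomputable def closePairs (a b : ℕ) (R : ℝ) : Finset (ℤ × ℤ) :=
  {q ∈ Icc (-(a : ℤ)) a ×ˢ Icc (-(b : ℤ)) b |
    Int.gcd q.1 a = 1 ∧ Int.gcd q.2 b = 1 ∧ ‖(q.1 : ℚ_[p]) / a - q.2 / b‖ < R}

lemma card_closePairs_le {a b : ℕ} (ha : 0 < a) (hab : a ≠ b) (hap : a.Coprime p)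
    (hbp : b.Coprime p) {R : ℝ} (hR : 0 < R) :
    (#(closePairs p a b R) : ℝ) ≤ 20 * a * b * R := by
  obtain ⟨v, hvR, hv⟩ := PadicInt.exists_zpow_lt_forall_norm_lt_imp_le (p := p) hR
  have hcount : #(closePairs p a b R) * p ^ v ≤ 20 * (a * b) := by
    refine card_mul_le_of_dvd_mul_sub_mul ha (pow_pos hp.out.pos v) fun q hq => ?_
    simp only [closePairs, mem_filter, mem_product, mem_Icc] at hq
    obtain ⟨⟨hα, hβ⟩, hαa, hβb, hlt⟩ := hq
    refine ⟨abs_le.mpr hα, abs_le.mpr hβ, ?_, mul_sub_mul_ne_zero_of_gcd_eq_one hab hαa hβb⟩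
    rw [Padic.norm_div_sub_div hap hbp] at hlt
    have hpv : ((p ^ v : ℕ) : ℤ) ∣ q.1 * b - q.2 * a := by
      push_cast
      exact PadicInt.norm_int_le_pow_iff_dvd.mp (hv _ (by simpa [PadicInt.norm_def] using hlt))
    have hg : ((a.gcd b : ℕ) : ℤ) ∣ q.1 * b - q.2 * a :=
      dvd_sub (dvd_mul_of_dvd_right (by exact_mod_cast Nat.gcd_dvd_right a b) _)
        (dvd_mul_of_dvd_right (by exact_mod_cast Nat.gcd_dvd_left a b) _)
    have hcop : Nat.Coprime (p ^ v) (a.gcd b) :=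
      ((Nat.Coprime.coprime_dvd_left (Nat.gcd_dvd_left a b) hap).symm).pow_left v
    rw [Nat.cast_mul]
    exact (Nat.isCoprime_iff_coprime.mpr hcop).mul_dvd hpv hg
  have hpv : (0 : ℝ) < (p : ℝ) ^ v := pow_pos (Nat.cast_pos.mpr hp.out.pos) v
  calc (#(closePairs p a b R) : ℝ)
      = #(closePairs p a b R) * p ^ v * (p : ℝ) ^ (-(v : ℤ)) := by
        rw [zpow_neg, zpow_natCast, mul_inv_cancel_right₀ hpv.ne']
    _ ≤ 20 * (a * b) * (p : ℝ) ^ (-(v : ℤ)) :=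
        mul_le_mul_of_nonneg_right (by exact_mod_cast hcount) (by positivity)
    _ ≤ 20 * a * b * R := by
        rw [← mul_assoc]; exact mul_le_mul_of_nonneg_left hvR.le (by positivity)

end closePairs

section measure

variable {p n : ℕ} [Fact p.Prime] {ψ : Fin n → ℕ → ℝ} {a0 b0 : ℕ}

lemma Aset_inter_Aset_subset_biUnion :
    Aset p n ψ a0 ∩ Aset p n ψ b0 ⊆
      ⋃ c ∈ Fintype.piFinset fun i => closePairs p a0 b0 (max (ψ i a0) (ψ i b0)),
        rect p n ψ a0 (Prod.fst ∘ c) ∩ rect p n ψ b0 (Prod.snd ∘ c) := by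
  rintro x ⟨hxa, hxb⟩
  obtain ⟨α, hα, hxα⟩ := Set.mem_iUnion₂.mp hxa
  obtain ⟨β, hβ, hxβ⟩ := Set.mem_iUnion₂.mp hxb
  refine Set.mem_iUnion₂.mpr
    ⟨fun i => (α i, β i), Fintype.mem_piFinset.mpr fun i => ?_, hxα, hxβ⟩
  simp only [closePairs, mem_filter, mem_product, mem_Icc]
  refine ⟨⟨abs_le.mp (hα i).1, abs_le.mp (hβ i).1⟩, (hα i).2, (hβ i).2, ?_⟩
  exact IsUltrametricDist.norm_sub_lt_max (by rw [norm_sub_rev]; exact hxα i)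
    (by rw [norm_sub_rev]; exact hxβ i)

lemma measure_rect_inter_rect_le [MeasurableSpace (Fin n → ℤ_[p])]
    [BorelSpace (Fin n → ℤ_[p])] (μ : Measure (Fin n → ℤ_[p])) [μ.IsAddLeftInvariant]
    [IsProbabilityMeasure μ]
    (hψa : ∀ i, 0 < ψ i a0) (hψb : ∀ i, 0 < ψ i b0) (α β : Fin n → ℤ) :
    μ (rect p n ψ a0 α ∩ rect p n ψ b0 β) ≤
      ENNReal.ofReal (∏ i, min (ψ i a0) (ψ i b0)) := by
  rcases (rect p n ψ a0 α ∩ rect p n ψ b0 β).eq_empty_or_nonempty with h | ⟨x₀, hx₀a, hx₀b⟩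
  · simp [h]
  refine (measure_mono fun x hx i => ?_).trans
    (PadicInt.measure_pi_ball_le μ x₀ fun i => lt_min (hψa i) (hψb i))
  rw [PadicInt.norm_def, PadicInt.coe_sub]
  exact lt_min (max_self (ψ i a0) ▸ IsUltrametricDist.norm_sub_lt_max (hx.1 i) (hx₀a i))
    (max_self (ψ i b0) ▸ IsUltrametricDist.norm_sub_lt_max (hx.2 i) (hx₀b i))

end measure

theorem stmt_4_general (p n : ℕ) [Fact p.Prime]
    [MeasurableSpace (Fin n → ℤ_[p])] [BorelSpace (Fin n → ℤ_[p])] :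
    ∃ C : ℝ≥0∞, C < ⊤ ∧
      ∀ ψ : Fin n → ℕ → ℝ, (∀ (i : Fin n) (q : ℕ), 0 < q → 0 < ψ i q ∧ ψ i q < 1 / q) →
        ∀ a0 b0 : ℕ, 0 < a0 → 0 < b0 → a0 ≠ b0 →
          Nat.Coprime a0 p → Nat.Coprime b0 p →
          ∀ μ : Measure (Fin n → ℤ_[p]), μ.IsAddHaarMeasure → IsProbabilityMeasure μ →
            μ (Aset p n ψ a0 ∩ Aset p n ψ b0) ≤
              C * ENNReal.ofReal
                ((a0 : ℝ) ^ n * (b0 : ℝ) ^ n * ∏ i, ψ i a0 * ψ i b0) := by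
  refine ⟨20 ^ n, ENNReal.pow_lt_top (by norm_num), ?_⟩
  intro ψ hψ a0 b0 ha0 hb0 hab ha0p hb0p μ _ _
  have hψa : ∀ i, 0 < ψ i a0 := fun i => (hψ i a0 ha0).1
  have hψb : ∀ i, 0 < ψ i b0 := fun i => (hψ i b0 hb0).1
  have hmin : ∀ i, 0 ≤ min (ψ i a0) (ψ i b0) := fun i => le_min (hψa i).le (hψb i).le
  set S := fun i => closePairs p a0 b0 (max (ψ i a0) (ψ i b0))
  have hS : ∀ i, (#(S i) : ℝ) * min (ψ i a0) (ψ i b0) ≤ 20 * a0 * b0 * (ψ i a0 * ψ i b0) := by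
    intro i
    rw [← min_mul_max (ψ i a0), mul_comm (min _ _), ← mul_assoc]
    exact mul_le_mul_of_nonneg_right
      (card_closePairs_le ha0 hab ha0p hb0p (lt_max_of_lt_left (hψa i))) (hmin i)
  calc μ (Aset p n ψ a0 ∩ Aset p n ψ b0)
      ≤ ∑ c ∈ Fintype.piFinset S, μ (rect p n ψ a0 (Prod.fst ∘ c) ∩ rect p n ψ b0 (Prod.snd ∘ c)) :=
        (measure_mono Aset_inter_Aset_subset_biUnion).trans (measure_biUnion_finset_le _ _)
    _ ≤ ∑ c ∈ Fintype.piFinset S, ENNReal.ofReal (∏ i, min (ψ i a0) (ψ i b0)) :=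
        sum_le_sum fun c _ => measure_rect_inter_rect_le μ hψa hψb _ _
    _ = ENNReal.ofReal (∏ i, #(S i) * min (ψ i a0) (ψ i b0)) := by
        rw [sum_const, Fintype.card_piFinset, nsmul_eq_mul, prod_mul_distrib,
          ENNReal.ofReal_mul (prod_nonneg fun i _ => Nat.cast_nonneg _), ← Nat.cast_prod,
          ENNReal.ofReal_natCast]
    _ ≤ ENNReal.ofReal (∏ i, 20 * a0 * b0 * (ψ i a0 * ψ i b0)) :=
        ENNReal.ofReal_le_ofReal <|
          prod_le_prod (fun i _ => mul_nonneg (Nat.cast_nonneg _) (hmin i)) fun i _ => hS i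
    _ = 20 ^ n * ENNReal.ofReal ((a0 : ℝ) ^ n * (b0 : ℝ) ^ n * ∏ i, ψ i a0 * ψ i b0) := by
        rw [prod_mul_distrib, prod_const, card_univ, Fintype.card_fin, mul_pow, mul_pow,
          mul_assoc, mul_assoc, ENNReal.ofReal_mul (by positivity),
          ENNReal.ofReal_pow (by norm_num), ENNReal.ofReal_ofNat, ← mul_assoc]

/-- For positive  with  and distinct  coprime
to , the Haar probability measure of  is
, with constant depending only on  and . -/
theorem stmt_4 (p n : ℕ) [Fact p.Prime] (hn : 1 ≤ n)
    [MeasurableSpace (Fin n → ℤ_[p])] [BorelSpace (Fin n → ℤ_[p])] :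
    ∃ C : ℝ≥0∞, C < ⊤ ∧
      ∀ ψ : Fin n → ℕ → ℝ, (∀ (i : Fin n) (q : ℕ), 0 < q → 0 < ψ i q ∧ ψ i q < 1 / q) →
        ∀ a0 b0 : ℕ, 0 < a0 → 0 < b0 → a0 ≠ b0 →
          Nat.Coprime a0 p → Nat.Coprime b0 p →
          ∀ μ : Measure (Fin n → ℤ_[p]), μ.IsAddHaarMeasure → IsProbabilityMeasure μ →
            μ (Aset p n ψ a0 ∩ Aset p n ψ b0) ≤
              C * ENNReal.ofReal
                ((a0 : ℝ) ^ n * (b0 : ℝ) ^ n * ∏ i, ψ i a0 * ψ i b0) :=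
  stmt_4_general p n
end

section
/- Let p be prime, n ≥ 1, and τ = (τ_1,…,τ_n) with each τ_i > 0. Then the Hausdorff dimension of the set 𝔚_n(τ) of x ∈ ℤ_p^n for which there are infinitely many (a_0,…,a_n) ∈ ℤ^{n+1}, 1 ≤ |a_i| ≤ a_0, with |x_i − a_i/a_0|_p < a_0^{−τ_i} for all i, satisfies dim 𝔚_n(τ) ≤ min_{1 ≤ i ≤ n} (n + 1 + ∑_{j : τ_j < τ_i}(τ_i − τ_j)) / τ_i. -/
open scoped ENNReal

/-- The weighted simultaneously approximable set `𝔚_n(τ)`: points of `ℤ_p^n` admitting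
infinitely many rational approximations `aᵢ/a₀` with `1 ≤ |aᵢ| ≤ a₀` and
`|xᵢ − aᵢ/a₀|_p < a₀^{−τᵢ}` for all `i`. -/
def Wtau (p n : ℕ) [Fact p.Prime] (τ : Fin n → ℝ) : Set (Fin n → ℤ_[p]) :=
  {x | {aa : ℕ × (Fin n → ℤ) | 0 < aa.1 ∧
      (∀ i, 1 ≤ |aa.2 i| ∧ |aa.2 i| ≤ (aa.1 : ℤ)) ∧
      ∀ i, ‖(x i : ℚ_[p]) - (aa.2 i : ℚ_[p]) / (aa.1 : ℚ_[p])‖ <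
        (aa.1 : ℝ) ^ (-(τ i))}.Infinite}

/-!
Every point of `𝔚_n(τ)` lies in infinitely many rectangles `∏ⱼ B(aⱼ/a₀, a₀^{-τⱼ})`. Fix `i` and
let `Kⱼ` be least with `p^{-Kⱼ} < a₀^{-τⱼ}`. The `j`-th side of a rectangle lies in a coset of
`p^{Kⱼ} ℤ_p`, which splits into `p^{max(Kᵢ - Kⱼ, 0)} ≤ p · a₀^{max(τᵢ - τⱼ, 0)}` cosets of
`p^{Kᵢ} ℤ_p`. So the `(2a₀)ⁿ` rectangles with denominator `a₀` are covered by
`O(a₀^{n + ∑_{τⱼ<τᵢ}(τᵢ-τⱼ)})` balls of radius `< a₀^{-τᵢ}`. When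
`τᵢ s > n + 1 + ∑_{τⱼ<τᵢ}(τᵢ-τⱼ)`, the `s`-volumes of these covers form a convergent series,
and the Hausdorff–Cantelli lemma gives `μH[s] 𝔚_n(τ) = 0`.
-/

open MeasureTheory Filter Topology Metric

theorem MeasureTheory.hausdorffMeasure_setOf_infinite_eq_zero {X κ ι : Type*}
    [EMetricSpace X] [MeasurableSpace X] [BorelSpace X] [Countable κ] (t : κ → Finset ι)
    (E : κ → ι → Set X) {s : ℝ} (hs : 0 < s) (h : ∑' m, ∑ k ∈ t m, ediam (E m k) ^ s ≠ ∞) :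
    μH[s] {x | {m | ∃ k ∈ t m, x ∈ E m k}.Infinite} = 0 := by
  let tail (F : Finset κ) : ℝ≥0∞ := ∑' m : {m // m ∉ F}, ∑ k ∈ t m, ediam (E m k) ^ s
  have htail : Tendsto tail atTop (𝓝 0) := ENNReal.tendsto_tsum_compl_atTop_zero h
  have hdiam (F : Finset κ) (m : {m // m ∉ F}) (k : t m) : ediam (E m k) ≤ tail F ^ s⁻¹ := by
    rw [ENNReal.le_rpow_inv_iff hs]
    exact (Finset.single_le_sum (f := fun k => ediam (E m k) ^ s) (fun _ _ => bot_le)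
      k.2).trans (ENNReal.le_tsum m)
  have hr : Tendsto (fun F => tail F ^ s⁻¹) atTop (𝓝 0) := by
    have := (ENNReal.continuous_rpow_const (y := s⁻¹)).tendsto 0 |>.comp htail
    rwa [ENNReal.zero_rpow_of_pos (inv_pos.2 hs)] at this
  have hcover (F : Finset κ) : {x | {m | ∃ k ∈ t m, x ∈ E m k}.Infinite} ⊆
      ⋃ i : Σ m : {m // m ∉ F}, t m, E i.1 i.2 := fun x hx => by
    obtain ⟨m, ⟨k, hk, hxk⟩, hmF⟩ := hx.exists_notMem_finset F
    exact Set.mem_iUnion.2 ⟨⟨⟨m, hmF⟩, ⟨k, hk⟩⟩, hxk⟩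
  have hsum (F : Finset κ) :
      ∑' i : Σ m : {m // m ∉ F}, t m, ediam (E i.1 i.2) ^ s = tail F := by
    rw [ENNReal.tsum_sigma']
    exact tsum_congr fun m => Finset.tsum_subtype (t m) fun k => ediam (E m k) ^ s
  have key := Measure.hausdorffMeasure_le_liminf_tsum
    (ι := fun F : Finset κ => Σ m : {m // m ∉ F}, t m) s _ _ hr (fun F i => E i.1 i.2)
    (Eventually.of_forall fun F i => hdiam F i.1 i.2) (Eventually.of_forall hcover)
  rw [funext hsum, htail.liminf_eq] at key
  exact le_antisymm key bot_le

theorem IsUltrametricDist.ediam_closedBall_le {X : Type*} [PseudoMetricSpace X]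
    [IsUltrametricDist X] (c : X) {r : ℝ} (hr : 0 ≤ r) :
    ediam (closedBall c r) ≤ ENNReal.ofReal r :=
  ediam_le fun x hx y hy => by
    rw [edist_le_ofReal hr]
    exact (dist_triangle_max x c y).trans (max_le hx (by rw [dist_comm]; exact hy))

theorem PadicInt.exists_lt_pow_norm_sub_le {p : ℕ} [Fact p.Prime] {x c : ℤ_[p]} {k : ℕ}
    (h : ‖x - c‖ ≤ (p : ℝ) ^ (-k : ℤ)) (K : ℕ) :
    ∃ v < p ^ (K - k), ‖x - (c + (p : ℤ_[p]) ^ k * v)‖ ≤ (p : ℝ) ^ (-K : ℤ) := by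
  obtain ⟨w, hw⟩ := Ideal.mem_span_singleton'.1 ((norm_le_pow_iff_mem_span_pow _ _).1 h)
  obtain ⟨u, hu⟩ := Ideal.mem_span_singleton'.1 (w.appr_spec (K - k))
  refine ⟨w.appr (K - k), w.appr_lt _, ?_⟩
  have hdiv : x - (c + (p : ℤ_[p]) ^ k * w.appr (K - k)) = u * (p : ℤ_[p]) ^ (k + (K - k)) := by
    rw [pow_add]
    linear_combination (-1 : ℤ_[p]) * hw - (p : ℤ_[p]) ^ k * hu
  calc _ ≤ (p : ℝ) ^ (-(k + (K - k) : ℕ) : ℤ) := (norm_le_pow_iff_mem_span_pow _ _).2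
        (hdiv ▸ Ideal.mul_mem_left _ _ (Ideal.mem_span_singleton_self _))
    _ ≤ (p : ℝ) ^ (-K : ℤ) :=
        zpow_le_zpow_right₀ (by exact_mod_cast (Fact.out : p.Prime).one_le) (by omega)

namespace Wtau

section Precision

variable (p : ℕ) [Fact p.Prime]

/-- For `r ≥ 1`, `p ^ precision p r` is the least power of `p` exceeding `r`. -/
noncomputable def precision (r : ℝ) : ℕ := ⌊Real.logb p r⌋₊ + 1

variable {p}

lemma one_lt_prime_cast : (1 : ℝ) < p := mod_cast (Fact.out : p.Prime).one_lt

lemma prime_cast_pos : (0 : ℝ) < p := zero_lt_one.trans one_lt_prime_cast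

lemma lt_pow_precision {r : ℝ} (hr : 0 < r) : r < (p : ℝ) ^ precision p r := by
  calc r = (p : ℝ) ^ Real.logb p r := (Real.rpow_logb prime_cast_pos
        one_lt_prime_cast.ne' hr).symm
    _ < (p : ℝ) ^ (precision p r : ℝ) :=
        Real.rpow_lt_rpow_of_exponent_lt one_lt_prime_cast (by
          push_cast [precision]; exact Nat.lt_floor_add_one _)
    _ = _ := Real.rpow_natCast _ _

lemma pow_precision_le {r : ℝ} (hr : 1 ≤ r) : (p : ℝ) ^ precision p r ≤ p * r := by
  have hlog : 0 ≤ Real.logb p r := Real.logb_nonneg one_lt_prime_cast hr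
  calc (p : ℝ) ^ precision p r = p * (p : ℝ) ^ (⌊Real.logb p r⌋₊ : ℝ) := by
        rw [Real.rpow_natCast, precision, pow_succ, mul_comm]
    _ ≤ p * (p : ℝ) ^ Real.logb p r := by
        gcongr
        · exact one_lt_prime_cast.le
        · exact Nat.floor_le hlog
    _ = p * r := by rw [Real.rpow_logb prime_cast_pos one_lt_prime_cast.ne' (by linarith)]

lemma precision_mono {r r' : ℝ} (hr : 0 < r) (h : r ≤ r') : precision p r ≤ precision p r' :=
  Nat.add_le_add_right (Nat.floor_mono (Real.logb_le_logb_of_le one_lt_prime_cast hr h)) 1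

lemma zpow_neg_precision_lt {r : ℝ} (hr : 0 < r) : (p : ℝ) ^ (-precision p r : ℤ) < r⁻¹ := by
  rw [zpow_neg, zpow_natCast]
  exact inv_strictAnti₀ hr (lt_pow_precision hr)

-- Norms in `ℤ_[p]` are powers of `p`.
lemma norm_le_zpow_neg_precision {z : ℤ_[p]} {r : ℝ} (hr : 1 ≤ r) (hz : ‖z‖ < r⁻¹) :
    ‖z‖ ≤ (p : ℝ) ^ (-precision p r : ℤ) := by
  rw [PadicInt.norm_le_pow_iff_norm_lt_pow_add_one]
  have hp := prime_cast_pos (p := p)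
  calc ‖z‖ < r⁻¹ := hz
    _ = p * (p * r)⁻¹ := by field_simp
    _ ≤ p * ((p : ℝ) ^ precision p r)⁻¹ := by gcongr; exact pow_precision_le hr
    _ = (p : ℝ) ^ (-precision p r + 1 : ℤ) := by
        rw [zpow_add₀ hp.ne', zpow_neg, zpow_natCast, zpow_one, mul_comm]

end Precision

section Cover

noncomputable def numerators (n m : ℕ) : Finset (Fin n → ℤ) :=
  Fintype.piFinset fun _ => (Finset.Icc (-(m : ℤ)) m).erase 0

lemma card_numerators (n m : ℕ) : (numerators n m).card = (2 * m) ^ n := by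
  rw [numerators, Fintype.card_piFinset, Finset.prod_const, Finset.card_univ, Fintype.card_fin,
    Finset.card_erase_of_mem (by simp), Int.card_Icc]
  congr 1
  omega

variable (p : ℕ) {n : ℕ} (τ : Fin n → ℝ) (i : Fin n)

noncomputable def digitBox (m : ℕ) : Finset (Fin n → ℕ) :=
  Fintype.piFinset fun j =>
    Finset.range (p ^ (precision p ((m : ℝ) ^ τ i) - precision p ((m : ℝ) ^ τ j)))

lemma card_digitBox (m : ℕ) : (digitBox p τ i m).card =
    ∏ j, p ^ (precision p ((m : ℝ) ^ τ i) - precision p ((m : ℝ) ^ τ j)) := by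
  simp [digitBox, Fintype.card_piFinset]

variable [Fact p.Prime]

/-- A point of `ℤ_[p]` in the ball `‖· - q‖ < ρ` of `ℚ_[p]`, provided the ball meets `ℤ_[p]`. -/
noncomputable def ballPoint (q : ℚ_[p]) (ρ : ℝ) : ℤ_[p] :=
  Classical.epsilon fun y : ℤ_[p] => ‖(y : ℚ_[p]) - q‖ < ρ

/-- As `v` runs over `digitBox p τ i m`, these balls of radius about `m ^ (-τ i)` cover the
rectangle `∏ⱼ B(aⱼ / m, m ^ (-τ j))`. -/
noncomputable def coverBall (m : ℕ) (av : (Fin n → ℤ) × (Fin n → ℕ)) : Set (Fin n → ℤ_[p]) :=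
  closedBall (fun j => ballPoint p ((av.1 j : ℚ_[p]) / (m : ℚ_[p])) ((m : ℝ) ^ (-τ j)) +
      (p : ℤ_[p]) ^ precision p ((m : ℝ) ^ τ j) * av.2 j)
    ((p : ℝ) ^ (-precision p ((m : ℝ) ^ τ i) : ℤ))

variable {p τ}

lemma norm_sub_ballPoint_lt {x : ℤ_[p]} {q : ℚ_[p]} {ρ : ℝ} (hx : ‖(x : ℚ_[p]) - q‖ < ρ) :
    ‖x - ballPoint p q ρ‖ < ρ := by
  have hq : ‖(ballPoint p q ρ : ℚ_[p]) - q‖ < ρ :=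
    Classical.epsilon_spec (p := fun y : ℤ_[p] => ‖(y : ℚ_[p]) - q‖ < ρ) ⟨x, hx⟩
  rw [PadicInt.norm_def, PadicInt.coe_sub, ← dist_eq_norm]
  rw [← dist_eq_norm] at hx hq
  exact (dist_triangle_max _ q _).trans_lt (max_lt hx (by rwa [dist_comm]))

lemma mem_numerators {m : ℕ} {a : Fin n → ℤ} (ha : ∀ j, 1 ≤ |a j| ∧ |a j| ≤ m) :
    a ∈ numerators n m :=
  Fintype.mem_piFinset.2 fun j => Finset.mem_erase.2
    ⟨abs_pos.1 (ha j).1, Finset.mem_Icc.2 (abs_le.1 (ha j).2)⟩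

lemma ediam_coverBall_le (m : ℕ) (av : (Fin n → ℤ) × (Fin n → ℕ)) :
    ediam (coverBall p τ i m av) ≤
      ENNReal.ofReal ((p : ℝ) ^ (-precision p ((m : ℝ) ^ τ i) : ℤ)) :=
  IsUltrametricDist.ediam_closedBall_le _ (zpow_nonneg prime_cast_pos.le _)

lemma exists_mem_coverBall (hτ : ∀ j, 0 ≤ τ j) {m : ℕ} (hm : 1 ≤ m) {x : Fin n → ℤ_[p]}
    {a : Fin n → ℤ}
    (hx : ∀ j, ‖(x j : ℚ_[p]) - (a j : ℚ_[p]) / (m : ℚ_[p])‖ < (m : ℝ) ^ (-τ j)) :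
    ∃ v ∈ digitBox p τ i m, x ∈ coverBall p τ i m (a, v) := by
  have hm' : (1 : ℝ) ≤ m := mod_cast hm
  have hdigit (j : Fin n) := PadicInt.exists_lt_pow_norm_sub_le
    (norm_le_zpow_neg_precision (Real.one_le_rpow hm' (hτ j))
      (by rw [← Real.rpow_neg (by positivity)]; exact norm_sub_ballPoint_lt (hx j)))
    (precision p ((m : ℝ) ^ τ i))
  choose v hv hxv using hdigit
  refine ⟨v, Fintype.mem_piFinset.2 fun j => Finset.mem_range.2 (hv j), ?_⟩
  rw [coverBall, mem_closedBall, dist_pi_le_iff (zpow_nonneg prime_cast_pos.le _)]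
  exact fun j => (dist_eq_norm _ _).trans_le (hxv j)

lemma subset_setOf_infinite (hτ : ∀ j, 0 ≤ τ j) : Wtau p n τ ⊆ {x |
    {m | ∃ av ∈ numerators n m ×ˢ digitBox p τ i m, x ∈ coverBall p τ i m av}.Infinite} := by
  intro x hx
  by_contra hfin
  refine hx ((Set.not_infinite.1 hfin).biUnion
    (fun m _ => (numerators n m).finite_toSet.image (Prod.mk m)) |>.subset ?_)
  rintro ⟨m, a⟩ ⟨hm, ha, hxa⟩
  obtain ⟨v, hv, hxv⟩ := exists_mem_coverBall i hτ hm hxa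
  exact Set.mem_biUnion ⟨(a, v), Finset.mem_product.2 ⟨mem_numerators ha, hv⟩, hxv⟩
    ⟨a, mem_numerators ha, rfl⟩

end Cover

section Estimate

variable {p : ℕ} [Fact p.Prime] {n : ℕ} {τ : Fin n → ℝ} {i : Fin n}

lemma pow_precision_sub_le {m : ℕ} (hm : 1 ≤ m) {τ₁ τ₂ : ℝ} (hτ₁ : 0 ≤ τ₁) :
    (p : ℝ) ^ (precision p ((m : ℝ) ^ τ₁) - precision p ((m : ℝ) ^ τ₂)) ≤
      p * (m : ℝ) ^ (if τ₂ < τ₁ then τ₁ - τ₂ else 0) := by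
  have hm' : (1 : ℝ) ≤ m := mod_cast hm
  have hpos (τ' : ℝ) : 0 < (m : ℝ) ^ τ' := by positivity
  split_ifs with h
  · have hK := precision_mono (p := p) (hpos τ₂) (Real.rpow_le_rpow_of_exponent_le hm' h.le)
    calc (p : ℝ) ^ (precision p ((m : ℝ) ^ τ₁) - precision p ((m : ℝ) ^ τ₂))
        = (p : ℝ) ^ precision p ((m : ℝ) ^ τ₁) / (p : ℝ) ^ precision p ((m : ℝ) ^ τ₂) :=
          pow_sub₀ _ prime_cast_pos.ne' hK
      _ ≤ p * (m : ℝ) ^ τ₁ / (m : ℝ) ^ τ₂ :=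
          div_le_div₀ (by positivity) (pow_precision_le (Real.one_le_rpow hm' hτ₁)) (hpos τ₂)
            (lt_pow_precision (hpos τ₂)).le
      _ = p * (m : ℝ) ^ (τ₁ - τ₂) := by rw [Real.rpow_sub (by positivity), mul_div_assoc]
  · have hK := precision_mono (p := p) (hpos τ₁)
      (Real.rpow_le_rpow_of_exponent_le hm' (not_lt.1 h))
    rw [Nat.sub_eq_zero_of_le hK, pow_zero, Real.rpow_zero, mul_one]
    exact one_lt_prime_cast.le

lemma prod_pow_precision_sub_le (hτ : 0 ≤ τ i) {m : ℕ} (hm : 1 ≤ m) :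
    ∏ j, (p : ℝ) ^ (precision p ((m : ℝ) ^ τ i) - precision p ((m : ℝ) ^ τ j)) ≤
      p ^ n * (m : ℝ) ^ (∑ j, if τ j < τ i then τ i - τ j else 0) := by
  calc _ ≤ ∏ j, (p * (m : ℝ) ^ (if τ j < τ i then τ i - τ j else 0)) :=
        Finset.prod_le_prod (fun _ _ => by positivity) fun _ _ => pow_precision_sub_le hm hτ
    _ = _ := by
        rw [Finset.prod_mul_distrib, Finset.prod_const, Finset.card_univ, Fintype.card_fin,
          Real.rpow_sum_of_pos (by positivity)]

lemma rpow_zpow_neg_precision_le {m : ℕ} (hm : 1 ≤ m) (τ' : ℝ) {s : ℝ} (hs : 0 ≤ s) :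
    ((p : ℝ) ^ (-precision p ((m : ℝ) ^ τ') : ℤ)) ^ s ≤ (m : ℝ) ^ (-(τ' * s)) := by
  have hm0 : (0 : ℝ) < m := by exact_mod_cast hm
  rw [Real.rpow_neg hm0.le, Real.rpow_mul hm0.le, ← Real.inv_rpow (by positivity)]
  exact Real.rpow_le_rpow (by positivity) (zpow_neg_precision_lt (by positivity)).le hs

lemma sum_ediam_coverBall_rpow_le (hτ : 0 ≤ τ i) {m : ℕ} (hm : 1 ≤ m) {s : ℝ}
    (hs : 0 ≤ s) :
    ∑ av ∈ numerators n m ×ˢ digitBox p τ i m, ediam (coverBall p τ i m av) ^ s ≤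
      ENNReal.ofReal (2 ^ n * p ^ n *
        (m : ℝ) ^ ((n : ℝ) + (∑ j, if τ j < τ i then τ i - τ j else 0) - τ i * s)) := by
  have hm0 : (0 : ℝ) < m := by exact_mod_cast hm
  set r := (p : ℝ) ^ (-precision p ((m : ℝ) ^ τ i) : ℤ)
  have hr : 0 ≤ r := zpow_nonneg prime_cast_pos.le _
  calc _ ≤ ∑ _av ∈ numerators n m ×ˢ digitBox p τ i m, ENNReal.ofReal (r ^ s) :=
        Finset.sum_le_sum fun av _ => by
          rw [← ENNReal.ofReal_rpow_of_nonneg hr hs]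
          exact ENNReal.rpow_le_rpow (ediam_coverBall_le i m av) hs
    _ = ENNReal.ofReal ((2 * m) ^ n * (∏ j, (p : ℝ) ^
          (precision p ((m : ℝ) ^ τ i) - precision p ((m : ℝ) ^ τ j))) * r ^ s) := by
        rw [Finset.sum_const, nsmul_eq_mul, Finset.card_product, card_numerators, card_digitBox,
          ENNReal.ofReal_mul (by positivity), ← ENNReal.ofReal_natCast]
        simp only [Nat.cast_mul, Nat.cast_pow, Nat.cast_prod, Nat.cast_ofNat]
    _ ≤ ENNReal.ofReal ((2 * m) ^ n * (p ^ n *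
          (m : ℝ) ^ (∑ j, if τ j < τ i then τ i - τ j else 0)) * (m : ℝ) ^ (-(τ i * s))) := by
        gcongr
        · exact prod_pow_precision_sub_le hτ hm
        · exact rpow_zpow_neg_precision_le hm (τ i) hs
    _ = _ := by
        rw [sub_eq_add_neg, Real.rpow_add hm0, Real.rpow_add hm0, Real.rpow_natCast]
        ring_nf

lemma tsum_sum_ediam_coverBall_rpow_ne_top (hτ : 0 ≤ τ i) {s : ℝ} (hs₀ : 0 ≤ s)
    (hs : (n : ℝ) + 1 + (∑ j, if τ j < τ i then τ i - τ j else 0) < τ i * s) :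
    ∑' m, ∑ av ∈ numerators n m ×ˢ digitBox p τ i m, ediam (coverBall p τ i m av) ^ s ≠ ∞ := by
  have hsum : Summable fun m : ℕ => 2 ^ n * (p : ℝ) ^ n *
      (m : ℝ) ^ ((n : ℝ) + (∑ j, if τ j < τ i then τ i - τ j else 0) - τ i * s) :=
    (Real.summable_nat_rpow.2 (by linarith)).mul_left _
  refine ne_top_of_le_ne_top (ENNReal.ofReal_tsum_of_nonneg (fun _ => by positivity) hsum ▸
    ENNReal.ofReal_ne_top) (ENNReal.tsum_le_tsum fun m => ?_)
  rcases Nat.eq_zero_or_pos m with rfl | hm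
  · have : numerators n 0 = ∅ := by
      rw [← Finset.card_eq_zero, card_numerators, mul_zero, zero_pow i.pos.ne']
    simp [this]
  · exact sum_ediam_coverBall_rpow_le hτ hm hs₀

end Estimate

lemma hausdorffMeasure_eq_zero {p n : ℕ} [Fact p.Prime] {τ : Fin n → ℝ}
    [MeasurableSpace (Fin n → ℤ_[p])] [BorelSpace (Fin n → ℤ_[p])] (hτ : ∀ j, 0 < τ j)
    (i : Fin n) {s : ℝ}
    (hs : (n : ℝ) + 1 + (∑ j, if τ j < τ i then τ i - τ j else 0) < τ i * s) :
    μH[s] (Wtau p n τ) = 0 := by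
  have hσ : 0 ≤ ∑ j, if τ j < τ i then τ i - τ j else 0 :=
    Finset.sum_nonneg fun j _ => by split_ifs with h <;> linarith
  have hs₀ : 0 < s := pos_of_mul_pos_right (by linarith) (hτ i).le
  exact measure_mono_null (subset_setOf_infinite i fun j => (hτ j).le)
    (hausdorffMeasure_setOf_infinite_eq_zero _ _ hs₀
      (tsum_sum_ediam_coverBall_rpow_ne_top (hτ i).le hs₀.le hs))

end Wtau

theorem stmt_8_general (p n : ℕ) [Fact p.Prime]
    (τ : Fin n → ℝ) (hτ : ∀ i, 0 < τ i) :
    dimH (Wtau p n τ) ≤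
      ⨅ i : Fin n, ENNReal.ofReal
        (((n : ℝ) + 1 + ∑ j, if τ j < τ i then τ i - τ j else 0) / τ i) := by
  borelize (Fin n → ℤ_[p])
  refine le_iInf fun i => dimH_le fun d hd => le_of_not_gt fun hlt => ?_
  rw [← ENNReal.ofReal_coe_nnreal, ENNReal.ofReal_lt_ofReal_iff', div_lt_iff₀ (hτ i)] at hlt
  rw [Wtau.hausdorffMeasure_eq_zero hτ i (by linarith [hlt.1])] at hd
  exact ENNReal.zero_ne_top hd

/-- upper bound of the weighted p-adic Jarník–Besicovitch theorem.
For positive exponents `τ`, the Hausdorff dimension of `𝔚_n(τ)` is at most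
`min_i (n + 1 + ∑_{j : τⱼ < τᵢ} (τᵢ − τⱼ)) / τᵢ`. -/
theorem stmt_8 (p n : ℕ) [Fact p.Prime] (hn : 1 ≤ n)
    (τ : Fin n → ℝ) (hτ : ∀ i, 0 < τ i) :
    dimH (Wtau p n τ) ≤
      ⨅ i : Fin n, ENNReal.ofReal
        (((n : ℝ) + 1 + ∑ j, if τ j < τ i then τ i - τ j else 0) / τ i) :=
  stmt_8_general p n τ hτ
end
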